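/- arXiv:2106.05608 — 2 statements merged into one kernel-verified Lean document; each statement's English description precedes it below -/
import Mathlib

section
/- Let σ > 0, let Σ₀ be a d×d real symmetric positive definite matrix, and let A₁,…,Aₙ ∈ ℝ^d satisfy ‖A_t‖₂ ≤ κ for all t. Then log( det(Σ₀⁻¹ + σ⁻² Σ_{t=1}^n A_t A_tᵀ) / det(Σ₀⁻¹) ) ≤ d · log(1 + n κ² λ_max(Σ₀) / (σ² d)), where λ_max(Σ₀) denotes the largest eigenvalue of Σ₀. -/
/-!
With `M = σ⁻² ∑ A_t A_tᵀ` and `R = Σ₀^{1/2}`, the ratio of determinants is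
`det (1 + Σ₀ M) = det (1 + R M R)` (Weinstein–Aronszajn), and `R M R` is positive semidefinite.
AM-GM on the eigenvalues of `1 + R M R` bounds its log-determinant by
`d log (1 + tr (Σ₀ M) / d)`, and `tr (Σ₀ M) = σ⁻² ∑ A_tᵀ Σ₀ A_t ≤ σ⁻² n κ² λ_max(Σ₀)`
by the Rayleigh bound.
-/

open Finset Matrix

namespace Real

theorem sum_log_le_card_mul_log_mean {ι : Type*} (s : Finset ι) {x : ι → ℝ}
    (hx : ∀ i ∈ s, 0 < x i) :
    ∑ i ∈ s, log (x i) ≤ #s * log ((∑ i ∈ s, x i) / #s) := by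
  rcases s.eq_empty_or_nonempty with rfl | hs
  · simp
  have hcard : (0 : ℝ) < #s := by exact_mod_cast hs.card_pos
  have hw : ∑ _i ∈ s, (#s : ℝ)⁻¹ = 1 := by
    rw [sum_const, nsmul_eq_mul, mul_inv_cancel₀ hcard.ne']
  have jensen := strictConcaveOn_log_Ioi.concaveOn.le_map_sum
    (fun _ _ => inv_nonneg.mpr hcard.le) hw hx
  simp only [smul_eq_mul, ← mul_sum] at jensen
  calc ∑ i ∈ s, log (x i) = #s * ((#s : ℝ)⁻¹ * ∑ i ∈ s, log (x i)) := by
        rw [← mul_assoc, mul_inv_cancel₀ hcard.ne', one_mul]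
    _ ≤ #s * log ((∑ i ∈ s, x i) / #s) := by
        rw [div_eq_inv_mul]
        exact mul_le_mul_of_nonneg_left jensen hcard.le

end Real

namespace Matrix

variable {n : Type*} [Fintype n]

theorem trace_mul_sum_vecMulVec_self {R ι : Type*} [CommSemiring R] (S : Matrix n n R)
    (s : Finset ι) (a : ι → n → R) :
    (S * ∑ t ∈ s, vecMulVec (a t) (a t)).trace = ∑ t ∈ s, a t ⬝ᵥ S *ᵥ a t := by
  simp only [Matrix.mul_sum, trace_sum, mul_vecMulVec, trace_vecMulVec, dotProduct_comm]

variable [DecidableEq n]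

theorem PosDef.log_det_le_card_mul_log_trace_div {P : Matrix n n ℝ} (hP : P.PosDef) :
    Real.log P.det ≤ Fintype.card n * Real.log (P.trace / Fintype.card n) := by
  rw [hP.1.det_eq_prod_eigenvalues, hP.1.trace_eq_sum_eigenvalues]
  simp only [RCLike.ofReal_real_eq_id, id]
  rw [Real.log_prod fun i _ => (hP.eigenvalues_pos i).ne']
  exact Real.sum_log_le_card_mul_log_mean univ fun i _ => hP.eigenvalues_pos i

theorem PosSemidef.log_det_one_add_le {B : Matrix n n ℝ} (hB : B.PosSemidef) :
    Real.log (1 + B).det ≤ Fintype.card n * Real.log (1 + B.trace / Fintype.card n) := by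
  cases isEmpty_or_nonempty n
  · simp
  have hcard : (Fintype.card n : ℝ) ≠ 0 := by positivity
  have := (PosDef.one.add_posSemidef hB).log_det_le_card_mul_log_trace_div
  rwa [trace_add, trace_one, add_div, div_self hcard] at this

theorem det_inv_add_div_det_inv {K : Type*} [Field K] {S : Matrix n n K} (hS : IsUnit S.det)
    (M : Matrix n n K) : (S⁻¹ + M).det / S⁻¹.det = (1 + S * M).det := by
  have : S⁻¹ + M = S⁻¹ * (1 + S * M) := by
    rw [Matrix.mul_add, mul_one, ← Matrix.mul_assoc, nonsing_inv_mul _ hS, Matrix.one_mul]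
  rw [this, det_mul, mul_div_cancel_left₀ _ (isUnit_nonsing_inv_det S hS).ne_zero]

section MatrixOrder

open scoped MatrixOrder

theorem PosDef.log_det_inv_add_div_det_inv_le {S M : Matrix n n ℝ} (hS : S.PosDef)
    (hM : M.PosSemidef) {c : ℝ} (hc : (S * M).trace ≤ c) :
    Real.log ((S⁻¹ + M).det / S⁻¹.det) ≤
      Fintype.card n * Real.log (1 + c / Fintype.card n) := by
  set R := CFC.sqrt S
  have hR : R.PosSemidef := (CFC.sqrt_nonneg S).posSemidef
  have hRR : R * R = S := CFC.sqrt_mul_sqrt_self S hS.posSemidef.nonneg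
  have hB : (R * M * R).PosSemidef := by
    simpa only [hR.1.eq] using hM.mul_mul_conjTranspose_same R
  have hdet : (1 + S * M).det = (1 + R * M * R).det := by
    rw [← hRR, Matrix.mul_assoc, det_one_add_mul_comm]
  have htr : (R * M * R).trace = (S * M).trace := by
    rw [trace_mul_comm, ← Matrix.mul_assoc, hRR]
  rw [det_inv_add_div_det_inv hS.det_pos.ne'.isUnit M, hdet]
  refine hB.log_det_one_add_le.trans ?_
  gcongr
  · have := hB.trace_nonneg
    positivity
  · exact htr ▸ hc

theorem IsHermitian.le_iSup_eigenvalues_smul_one {S : Matrix n n ℝ} (hS : S.IsHermitian) :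
    S ≤ (⨆ i, hS.eigenvalues i) • (1 : Matrix n n ℝ) := by
  rw [← Algebra.algebraMap_eq_smul_one]
  refine le_algebraMap_of_spectrum_le (fun x hx => ?_) hS.isSelfAdjoint
  rw [hS.spectrum_real_eq_range_eigenvalues] at hx
  obtain ⟨i, rfl⟩ := hx
  exact le_ciSup (Set.finite_range _).bddAbove i

end MatrixOrder

theorem IsHermitian.dotProduct_mulVec_le_iSup_eigenvalues_mul {S : Matrix n n ℝ}
    (hS : S.IsHermitian) (x : n → ℝ) :
    x ⬝ᵥ S *ᵥ x ≤ (⨆ i, hS.eigenvalues i) * (x ⬝ᵥ x) := by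
  have := hS.le_iSup_eigenvalues_smul_one.dotProduct_mulVec_nonneg x
  simpa only [star_trivial, sub_mulVec, smul_mulVec, one_mulVec, dotProduct_sub, dotProduct_smul,
    smul_eq_mul, sub_nonneg] using this

end Matrix

theorem log_det_ratio_le_general {d n : ℕ} (σ κ : ℝ)
    (S0 : Matrix (Fin d) (Fin d) ℝ) (hS0 : S0.PosDef)
    (A : ℕ → Fin d → ℝ)
    (hA : ∀ t ∈ Finset.Icc 1 n, Real.sqrt (A t ⬝ᵥ A t) ≤ κ) :
    Real.log
        ((S0⁻¹ + (σ ^ 2)⁻¹ • ∑ t ∈ Finset.Icc 1 n, Matrix.vecMulVec (A t) (A t)).det /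
          (S0⁻¹).det) ≤
      d * Real.log (1 + n * κ ^ 2 * (⨆ i, hS0.1.eigenvalues i) / (σ ^ 2 * d)) := by
  set L := ⨆ i, hS0.1.eigenvalues i
  have hL : 0 ≤ L := Real.iSup_nonneg fun i => (hS0.eigenvalues_pos i).le
  have hM : ((σ ^ 2)⁻¹ • ∑ t ∈ Icc 1 n, vecMulVec (A t) (A t)).PosSemidef :=
    (posSemidef_sum _ fun t _ => by
      simpa only [star_trivial] using posSemidef_vecMulVec_self_star (A t)).smul
      (by positivity)
  have hquad : ∀ t ∈ Icc 1 n, A t ⬝ᵥ S0 *ᵥ A t ≤ L * κ ^ 2 := fun t ht =>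
    calc A t ⬝ᵥ S0 *ᵥ A t ≤ L * (A t ⬝ᵥ A t) :=
          hS0.1.dotProduct_mulVec_le_iSup_eigenvalues_mul (A t)
      _ ≤ L * κ ^ 2 := mul_le_mul_of_nonneg_left (Real.sqrt_le_iff.mp (hA t ht)).2 hL
  have htrace : (S0 * ((σ ^ 2)⁻¹ • ∑ t ∈ Icc 1 n, vecMulVec (A t) (A t))).trace ≤
      n * κ ^ 2 * L / σ ^ 2 := by
    rw [mul_smul_comm, trace_smul, trace_mul_sum_vecMulVec_self, smul_eq_mul]
    calc (σ ^ 2)⁻¹ * ∑ t ∈ Icc 1 n, A t ⬝ᵥ S0 *ᵥ A t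
        ≤ (σ ^ 2)⁻¹ * (n * (L * κ ^ 2)) := by
          gcongr
          simpa only [Nat.card_Icc, add_tsub_cancel_right, nsmul_eq_mul] using
            sum_le_card_nsmul _ _ _ hquad
      _ = n * κ ^ 2 * L / σ ^ 2 := by ring
  simpa only [Fintype.card_fin, div_div] using hS0.log_det_inv_add_div_det_inv_le hM htrace

/-- Let `σ > 0`, `Σ₀` positive definite `d×d`, and `A₁,…,Aₙ ∈ ℝ^d` with `‖A_t‖₂ ≤ κ`.
Then `log(det(Σ₀⁻¹ + σ⁻² Σ_t A_t A_tᵀ)/det(Σ₀⁻¹)) ≤ d log(1 + n κ² λ_max(Σ₀)/(σ² d))`. -/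
theorem log_det_ratio_le {d n : ℕ} (hd : 0 < d) (σ κ : ℝ) (hσ : 0 < σ)
    (S0 : Matrix (Fin d) (Fin d) ℝ) (hS0 : S0.PosDef)
    (A : ℕ → Fin d → ℝ)
    (hA : ∀ t ∈ Finset.Icc 1 n, Real.sqrt (A t ⬝ᵥ A t) ≤ κ) :
    Real.log
        ((S0⁻¹ + (σ ^ 2)⁻¹ • ∑ t ∈ Finset.Icc 1 n, Matrix.vecMulVec (A t) (A t)).det /
          (S0⁻¹).det) ≤
      d * Real.log (1 + n * κ ^ 2 * (⨆ i, hS0.1.eigenvalues i) / (σ ^ 2 * d)) :=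
  log_det_ratio_le_general σ κ S0 hS0 A hA
end

section
/- Let 𝒳 and 𝒜 be finite nonempty sets, let n, h ≥ 1 be integers, and let (x_{t,i}, a_{t,i}) ∈ 𝒳×𝒜 for t = 1,…,n and i = 1,…,h be an arbitrary doubly indexed sequence of state-action pairs. For each pair (x,a) let N_t(x,a) = Σ_{ℓ=1}^{t−1} Σ_{i=1}^{h} 1{x_{ℓ,i} = x, a_{ℓ,i} = a}. Then for every Λ > 0, Σ_{t=1}^{n} Σ_{i=1}^{h} 1{N_t(x_{t,i}, a_{t,i}) > h} · √( 2 log(2|𝒳||𝒜|n) / (Λ + N_t(x_{t,i}, a_{t,i}) + 1) ) ≤ 2 √( |𝒳||𝒜| n h · log(2|𝒳||𝒜|n) · log(1 + n h / (2|𝒳||𝒜|Λ)) ). -/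
/-!
By Cauchy–Schwarz over the `n h` steps, the sum is at most `√(2 n h log(2|𝒳||𝒜|n) · C)`, where
`C` is the sum of the weights `1{N > h} / (Λ + N + 1)`. Grouping `C` by state-action pair, each
pair contributes at most `2 log (1 + N_{n+1} / (2Λ))`: while `N_t > h`, the at most `h` visits of
episode `t` raise `N` by at most `N_t`, so the potential `2 log (1 + N / (2Λ))` grows by at least
their weight. Concavity of `log` and `∑ N_{n+1} = n h` then give
`C ≤ 2 |𝒳||𝒜| log (1 + n h / (2 |𝒳||𝒜| Λ))`.
-/

open Finset Real

lemma sum_sqrt_le_sqrt_card_mul_sum {ι : Type*} (s : Finset ι) {u : ι → ℝ} (hu : ∀ i, 0 ≤ u i) :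
    ∑ i ∈ s, √(u i) ≤ √(#s * ∑ i ∈ s, u i) := by
  simpa [sqrt_mul (Nat.cast_nonneg _)] using
    sum_sqrt_mul_sqrt_le s (f := fun _ ↦ 1) (fun _ ↦ zero_le_one) hu

lemma sum_sum_sqrt_le_sqrt_card_mul_card_mul_sum {ι κ : Type*} (s : Finset ι) (r : Finset κ)
    {u : ι → κ → ℝ} (hu : ∀ i j, 0 ≤ u i j) :
    ∑ i ∈ s, ∑ j ∈ r, √(u i j) ≤ √(#s * #r * ∑ i ∈ s, ∑ j ∈ r, u i j) := by
  simpa [sum_product, card_product] using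
    sum_sqrt_le_sqrt_card_mul_sum (s ×ˢ r) (u := fun p ↦ u p.1 p.2) fun p ↦ hu p.1 p.2

lemma sum_log_one_add_le_card_mul_log {ι : Type*} [Fintype ι] {z : ι → ℝ} (hz : ∀ i, -1 < z i) :
    ∑ i, log (1 + z i) ≤ Fintype.card ι * log (1 + (∑ i, z i) / Fintype.card ι) := by
  rcases isEmpty_or_nonempty ι with _ | _
  · simp
  have hK : (0 : ℝ) < Fintype.card ι := by exact_mod_cast Fintype.card_pos
  have jensen := strictConcaveOn_log_Ioi.concaveOn.le_map_sum (t := univ)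
    (w := fun _ ↦ (Fintype.card ι : ℝ)⁻¹) (p := fun i ↦ 1 + z i) (fun _ _ ↦ by positivity)
    (by simp [hK.ne']) (fun i _ ↦ by simp only [Set.mem_Ioi]; linarith [hz i])
  simp only [smul_eq_mul, ← mul_sum, sum_add_distrib, sum_const, card_univ, nsmul_eq_mul,
    mul_one] at jensen
  rw [mul_add, inv_mul_cancel₀ hK.ne', inv_mul_eq_div, inv_mul_eq_div, div_le_iff₀ hK] at jensen
  linarith

lemma div_le_two_mul_log_one_add_sub {Λ N m : ℝ} (hΛ : 0 < Λ) (hN : 0 ≤ N) (hm₀ : 0 ≤ m)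
    (hm : m ≤ N + 2) :
    m / (Λ + N + 1) ≤ 2 * log (1 + (N + m) / (2 * Λ)) - 2 * log (1 + N / (2 * Λ)) := by
  have hlog : m / (2 * Λ + N + m) ≤ log (1 + (N + m) / (2 * Λ)) - log (1 + N / (2 * Λ)) := by
    rw [← log_div (by positivity) (by positivity)]
    convert one_sub_inv_le_log_of_pos (x := (1 + (N + m) / (2 * Λ)) / (1 + N / (2 * Λ)))
      (by positivity) using 1
    field_simp
    ring
  have hcompare : m / (Λ + N + 1) ≤ 2 * (m / (2 * Λ + N + m)) := by
    rw [mul_div_assoc', div_le_div_iff₀ (by positivity) (by positivity)]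
    nlinarith
  linarith

lemma sum_mul_indicator_div_le_two_mul_log {h : ℕ} {Λ : ℝ} (hΛ : 0 < Λ) {m N : ℕ → ℕ}
    (hm : ∀ t, m t ≤ h) (hN : ∀ t, N t = ∑ l ∈ Ico 1 t, m l) (n : ℕ) :
    ∑ t ∈ Icc 1 n, (m t : ℝ) * ((if h < N t then 1 else 0) / (Λ + N t + 1)) ≤
      2 * log (1 + N (n + 1) / (2 * Λ)) := by
  induction n with
  | zero => simp [hN]
  | succ n ih =>
    have hstep : N (n + 1 + 1) = N (n + 1) + m (n + 1) := by
      rw [hN, hN, sum_Ico_succ_top (by omega)]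
    rw [sum_Icc_succ_top (by omega), hstep, Nat.cast_add]
    split_ifs with hlt
    · have := div_le_two_mul_log_one_add_sub hΛ (N (n + 1)).cast_nonneg (m (n + 1)).cast_nonneg
        (by exact_mod_cast (hm (n + 1)).trans (by omega))
      rw [mul_one_div]
      linarith
    · have hmono : log (1 + N (n + 1) / (2 * Λ)) ≤ log (1 + (N (n + 1) + m (n + 1)) / (2 * Λ)) := by
        gcongr
        simp
      simp only [zero_div, mul_zero, add_zero]
      linarith

section VisitCount

variable {α : Type*} [DecidableEq α]

def episodeCount (z : ℕ → ℕ → α) (h l : ℕ) (y : α) : ℕ := #{i ∈ Icc 1 h | z l i = y}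

/-- The paper's `N_t(y)`, episodes and steps being numbered from `1`. -/
def visitCount (z : ℕ → ℕ → α) (h t : ℕ) (y : α) : ℕ := ∑ l ∈ Ico 1 t, episodeCount z h l y

lemma episodeCount_le (z : ℕ → ℕ → α) (h l : ℕ) (y : α) : episodeCount z h l y ≤ h :=
  (card_filter_le _ _).trans_eq (Nat.card_Icc 1 h)

lemma sum_visitCount [Fintype α] (z : ℕ → ℕ → α) (h n : ℕ) :
    ∑ y, visitCount z h (n + 1) y = n * h := by
  simp only [visitCount, episodeCount]
  rw [sum_comm]
  simp [← card_eq_sum_card_fiberwise (fun _ _ ↦ mem_univ _)]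

lemma sum_indicator_div_visitCount_le [Fintype α] {Λ : ℝ} (hΛ : 0 < Λ) (z : ℕ → ℕ → α)
    (n h : ℕ) :
    ∑ t ∈ Icc 1 n, ∑ i ∈ Icc 1 h, (if h < visitCount z h t (z t i) then (1 : ℝ) else 0) /
        (Λ + visitCount z h t (z t i) + 1) ≤
      2 * Fintype.card α * log (1 + n * h / (2 * Fintype.card α * Λ)) := by
  set w : ℕ → α → ℝ := fun t y ↦
    (if h < visitCount z h t y then 1 else 0) / (Λ + visitCount z h t y + 1)
  calc ∑ t ∈ Icc 1 n, ∑ i ∈ Icc 1 h, w t (z t i)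
      = ∑ t ∈ Icc 1 n, ∑ y, (episodeCount z h t y : ℝ) * w t y := by
        refine sum_congr rfl fun t _ ↦ ?_
        simp [← sum_fiberwise' (Icc 1 h) (z t), episodeCount]
    _ = ∑ y, ∑ t ∈ Icc 1 n, (episodeCount z h t y : ℝ) * w t y := sum_comm
    _ ≤ ∑ y, 2 * log (1 + visitCount z h (n + 1) y / (2 * Λ)) :=
        sum_le_sum fun y _ ↦ sum_mul_indicator_div_le_two_mul_log hΛ
          (fun t ↦ episodeCount_le z h t y) (fun t ↦ rfl) n
    _ ≤ 2 * (Fintype.card α *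
          log (1 + (∑ y, (visitCount z h (n + 1) y : ℝ) / (2 * Λ)) / Fintype.card α)) := by
        rw [← mul_sum]
        gcongr
        exact sum_log_one_add_le_card_mul_log fun y ↦ by
          linarith [show (0 : ℝ) ≤ visitCount z h (n + 1) y / (2 * Λ) by positivity]
    _ = 2 * Fintype.card α * log (1 + n * h / (2 * Fintype.card α * Λ)) := by
        rw [← sum_div, ← Nat.cast_sum, sum_visitCount, div_div, mul_right_comm 2 Λ]
        push_cast
        ring

end VisitCount

theorem sum_indicator_sqrt_count_le_general {𝒳 𝒜 : Type*} [Fintype 𝒳] [Fintype 𝒜]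
    [DecidableEq 𝒳] [DecidableEq 𝒜]
    {n h : ℕ}
    (x : ℕ → ℕ → 𝒳) (a : ℕ → ℕ → 𝒜)
    (N : ℕ → 𝒳 → 𝒜 → ℕ)
    (hN : ∀ t p q, N t p q =
      ∑ l ∈ Finset.Ico 1 t, ∑ i ∈ Finset.Icc 1 h,
        if x l i = p ∧ a l i = q then 1 else 0)
    (Λ : ℝ) (hΛ : 0 < Λ) :
    ∑ t ∈ Finset.Icc 1 n, ∑ i ∈ Finset.Icc 1 h,
        (if h < N t (x t i) (a t i) then (1 : ℝ) else 0) *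
          Real.sqrt (2 * Real.log (2 * Fintype.card 𝒳 * Fintype.card 𝒜 * n) /
            (Λ + N t (x t i) (a t i) + 1)) ≤
      2 * Real.sqrt ((Fintype.card 𝒳 : ℝ) * Fintype.card 𝒜 * n * h *
        Real.log (2 * Fintype.card 𝒳 * Fintype.card 𝒜 * n) *
        Real.log (1 + n * h / (2 * Fintype.card 𝒳 * Fintype.card 𝒜 * Λ))) := by
  set z : ℕ → ℕ → 𝒳 × 𝒜 := fun l i ↦ (x l i, a l i)
  have hNz : ∀ t p q, N t p q = visitCount z h t (p, q) := by
    intro t p q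
    simp only [hN, visitCount, episodeCount, card_filter, z, Prod.mk.injEq]
  set L := log (2 * Fintype.card 𝒳 * Fintype.card 𝒜 * n)
  have hL : 0 ≤ L := by
    simpa [L] using log_natCast_nonneg (2 * Fintype.card 𝒳 * Fintype.card 𝒜 * n)
  set w : ℕ → 𝒳 × 𝒜 → ℝ := fun t y ↦
    (if h < visitCount z h t y then 1 else 0) / (Λ + visitCount z h t y + 1)
  have hsummand : ∀ t i, (if h < N t (x t i) (a t i) then (1 : ℝ) else 0) *
      √(2 * L / (Λ + N t (x t i) (a t i) + 1)) = √(2 * L * w t (z t i)) := by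
    intro t i
    simp only [hNz, w, z]
    split_ifs <;> simp [div_eq_mul_inv, mul_assoc]
  calc _ = ∑ t ∈ Icc 1 n, ∑ i ∈ Icc 1 h, √(2 * L * w t (z t i)) := by simp_rw [hsummand]
    _ ≤ √(#(Icc 1 n) * #(Icc 1 h) * ∑ t ∈ Icc 1 n, ∑ i ∈ Icc 1 h, 2 * L * w t (z t i)) :=
        sum_sum_sqrt_le_sqrt_card_mul_card_mul_sum _ _ fun _ _ ↦ by positivity
    _ ≤ √(n * h * (2 * L * (2 * Fintype.card (𝒳 × 𝒜) *
          log (1 + n * h / (2 * Fintype.card (𝒳 × 𝒜) * Λ))))) := by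
        simp only [Nat.card_Icc, add_tsub_cancel_right, ← mul_sum]
        gcongr
        exact sum_indicator_div_visitCount_le hΛ z n h
    _ = _ := by
        rw [Fintype.card_prod, Nat.cast_mul, ← mul_assoc 2]
        rw [show ∀ y : ℝ, n * h * (2 * L * (2 * Fintype.card 𝒳 * Fintype.card 𝒜 * y)) =
            2 ^ 2 * (Fintype.card 𝒳 * Fintype.card 𝒜 * n * h * L * y) by intro; ring,
          sqrt_mul (by positivity), sqrt_sq zero_le_two]

/-- Let `𝒳, 𝒜` be finite nonempty sets, `n, h ≥ 1`, and `(x_{t,i}, a_{t,i})` an arbitrary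
doubly indexed sequence of state-action pairs, with visit counts
`N_t(x,a) = Σ_{ℓ=1}^{t−1} Σ_{i=1}^{h} 1{x_{ℓ,i} = x, a_{ℓ,i} = a}`. Then for every `Λ > 0`,
`Σ_{t=1}^n Σ_{i=1}^h 1{N_t(x_{t,i},a_{t,i}) > h} √(2 log(2|𝒳||𝒜|n)/(Λ + N_t + 1))
  ≤ 2 √(|𝒳||𝒜| n h log(2|𝒳||𝒜|n) log(1 + n h/(2|𝒳||𝒜|Λ)))`. -/
theorem sum_indicator_sqrt_count_le {𝒳 𝒜 : Type*} [Fintype 𝒳] [Fintype 𝒜]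
    [DecidableEq 𝒳] [DecidableEq 𝒜] [Nonempty 𝒳] [Nonempty 𝒜]
    {n h : ℕ} (hn : 1 ≤ n) (hh : 1 ≤ h)
    (x : ℕ → ℕ → 𝒳) (a : ℕ → ℕ → 𝒜)
    (N : ℕ → 𝒳 → 𝒜 → ℕ)
    (hN : ∀ t p q, N t p q =
      ∑ l ∈ Finset.Ico 1 t, ∑ i ∈ Finset.Icc 1 h,
        if x l i = p ∧ a l i = q then 1 else 0)
    (Λ : ℝ) (hΛ : 0 < Λ) :
    ∑ t ∈ Finset.Icc 1 n, ∑ i ∈ Finset.Icc 1 h,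
        (if h < N t (x t i) (a t i) then (1 : ℝ) else 0) *
          Real.sqrt (2 * Real.log (2 * Fintype.card 𝒳 * Fintype.card 𝒜 * n) /
            (Λ + N t (x t i) (a t i) + 1)) ≤
      2 * Real.sqrt ((Fintype.card 𝒳 : ℝ) * Fintype.card 𝒜 * n * h *
        Real.log (2 * Fintype.card 𝒳 * Fintype.card 𝒜 * n) *
        Real.log (1 + n * h / (2 * Fintype.card 𝒳 * Fintype.card 𝒜 * Λ))) :=
  sum_indicator_sqrt_count_le_general x a N hN Λ hΛ
end
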